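/- Let $p \geq 1$ and let $b_1,\dots,b_p$ be integers. Then $\sum_{t=1}^{p} \frac{(-1)^t}{t} \sum_{\tau \in S_p} \left( \sum_{i=1}^{t} b_{\tau(i)} \right) \prod_{j=t+1}^{p} \left( b_{\tau(j)} - 1 \right) = p! \left( (-1)^p - \prod_{i=1}^{p} (b_i - 1) \right)$. -/
import Mathlib



open Finset Equiv

private noncomputable def Pfun {p : ℕ} (c : Fin p → ℚ) (t : ℕ) : ℚ :=
  ∑ τ : Equiv.Perm (Fin p), ∏ j ∈ Finset.univ.filter (fun j : Fin p => t ≤ (j : ℕ)), c (τ j)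

private lemma card_filter_lt {p t : ℕ} (ht : t ≤ p) :
    (Finset.univ.filter (fun i : Fin p => (i : ℕ) < t)).card = t := by
  have : (Finset.univ.filter (fun i : Fin p => (i : ℕ) < t))
      = Finset.map (Fin.castLEEmb ht) Finset.univ := by
    ext j
    simp only [mem_filter, mem_univ, true_and, Finset.mem_map, Fin.castLEEmb, Fin.castLE]
    constructor
    · intro h; exact ⟨⟨(j : ℕ), h⟩, by ext; simp⟩
    · rintro ⟨i, rfl⟩; simpa using i.isLt
  simp [this]

private lemma Pfun_top {p : ℕ} (c : Fin p → ℚ) : Pfun c p = Nat.factorial p := by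
  have h : (Finset.univ.filter (fun j : Fin p => p ≤ (j : ℕ))) = ∅ := by
    ext j; simp [Nat.not_le.mpr j.isLt]
  simp [Pfun, h, Finset.card_univ, Fintype.card_perm]

private lemma Pfun_zero {p : ℕ} (c : Fin p → ℚ) :
    Pfun c 0 = Nat.factorial p * ∏ i, c i := by
  have h : (Finset.univ.filter (fun j : Fin p => 0 ≤ (j : ℕ))) = Finset.univ := by
    simp
  have h2 : ∀ τ : Equiv.Perm (Fin p), ∏ j, c (τ j) = ∏ i, c i :=
    fun τ => Equiv.prod_comp τ c
  simp [Pfun, h, h2, Finset.card_univ, Fintype.card_perm]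

private lemma key_swap {p t : ℕ} (c : Fin p → ℚ) (ht1 : 1 ≤ t) (ht : t ≤ p)
    (i : Fin p) (hi : (i : ℕ) < t) :
    ∑ τ : Equiv.Perm (Fin p),
      c (τ i) * ∏ j ∈ Finset.univ.filter (fun j : Fin p => t ≤ (j : ℕ)), c (τ j)
    = Pfun c (t - 1) := by
  have hk : t - 1 < p := by omega
  set k : Fin p := ⟨t - 1, hk⟩ with hkdef
  have hfilter : (Finset.univ.filter (fun j : Fin p => t - 1 ≤ (j : ℕ)))
      = insert k (Finset.univ.filter (fun j : Fin p => t ≤ (j : ℕ))) := by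
    ext j
    simp only [Finset.mem_filter, Finset.mem_univ, true_and, Finset.mem_insert,
      Fin.ext_iff, hkdef]
    omega
  have hknot : k ∉ (Finset.univ.filter (fun j : Fin p => t ≤ (j : ℕ))) := by
    simp [hkdef]; omega
  rw [Pfun]
  rw [← Equiv.sum_comp (Equiv.mulRight (Equiv.swap i k))
    (fun τ => ∏ j ∈ Finset.univ.filter (fun j : Fin p => t - 1 ≤ (j : ℕ)), c (τ j))]
  apply Finset.sum_congr rfl
  intro τ _
  simp only [Equiv.coe_mulRight, Equiv.Perm.coe_mul, Function.comp]
  rw [hfilter, Finset.prod_insert hknot]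
  congr 1
  · simp [Equiv.swap_apply_right]
  · apply Finset.prod_congr rfl
    intro j hj
    simp only [Finset.mem_filter] at hj
    have hji : j ≠ i := by intro h; subst h; omega
    have hjk : j ≠ k := by intro h; subst h; simp [hkdef] at hj; omega
    rw [Equiv.swap_apply_of_ne_of_ne hji hjk]

/-- Telescoping identity:
`∑_{t=1}^p ((-1)^t / t) ∑_{τ ∈ S_p} (∑_{i=1}^t b_{τ(i)}) ∏_{j=t+1}^p (b_{τ(j)} - 1)
= p!((-1)^p - ∏ᵢ (bᵢ - 1))`. -/
theorem stmt_13 (p : ℕ) (hp : 1 ≤ p) (b : Fin p → ℤ) :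
    ∑ t ∈ Finset.Icc 1 p, ((-1 : ℚ) ^ t / (t : ℚ)) *
      ∑ τ : Equiv.Perm (Fin p),
        (∑ i ∈ Finset.univ.filter (fun i : Fin p => (i : ℕ) < t), (b (τ i) : ℚ)) *
          ∏ j ∈ Finset.univ.filter (fun j : Fin p => t ≤ (j : ℕ)), ((b (τ j) : ℚ) - 1)
    = (Nat.factorial p : ℚ) * ((-1) ^ p - ∏ i, ((b i : ℚ) - 1)) := by
  set c : Fin p → ℚ := fun i => (b i : ℚ) - 1 with hc
  set f : ℕ → ℚ := fun t => (-1 : ℚ) ^ t * Pfun c t with hf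
  have hterm : ∀ t ∈ Finset.Icc 1 p,
      ((-1 : ℚ) ^ t / (t : ℚ)) *
        ∑ τ : Equiv.Perm (Fin p),
          (∑ i ∈ Finset.univ.filter (fun i : Fin p => (i : ℕ) < t), (b (τ i) : ℚ)) *
            ∏ j ∈ Finset.univ.filter (fun j : Fin p => t ≤ (j : ℕ)), ((b (τ j) : ℚ) - 1)
      = f t - f (t - 1) := by
    intro t ht
    rw [Finset.mem_Icc] at ht
    obtain ⟨ht1, htp⟩ := ht
    have hcard := card_filter_lt (p := p) (t := t) htp
    -- rewrite the inner sum
    have hS : ∑ τ : Equiv.Perm (Fin p),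
        (∑ i ∈ Finset.univ.filter (fun i : Fin p => (i : ℕ) < t), (b (τ i) : ℚ)) *
          ∏ j ∈ Finset.univ.filter (fun j : Fin p => t ≤ (j : ℕ)), ((b (τ j) : ℚ) - 1)
        = (t : ℚ) * (Pfun c t + Pfun c (t - 1)) := by
      have hb : ∀ τ : Equiv.Perm (Fin p),
          (∑ i ∈ Finset.univ.filter (fun i : Fin p => (i : ℕ) < t), (b (τ i) : ℚ))
          = (t : ℚ) + ∑ i ∈ Finset.univ.filter (fun i : Fin p => (i : ℕ) < t), c (τ i) := by
        intro τ
        have : ∀ i : Fin p, (b (τ i) : ℚ) = c (τ i) + 1 := by intro i; simp [hc]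
        simp only [this, Finset.sum_add_distrib, Finset.sum_const, hcard, nsmul_eq_mul,
          mul_one]
        ring
      calc ∑ τ : Equiv.Perm (Fin p),
          (∑ i ∈ Finset.univ.filter (fun i : Fin p => (i : ℕ) < t), (b (τ i) : ℚ)) *
            ∏ j ∈ Finset.univ.filter (fun j : Fin p => t ≤ (j : ℕ)), ((b (τ j) : ℚ) - 1)
          = ∑ τ : Equiv.Perm (Fin p),
            ((t : ℚ) * ∏ j ∈ Finset.univ.filter (fun j : Fin p => t ≤ (j : ℕ)), c (τ j)
            + ∑ i ∈ Finset.univ.filter (fun i : Fin p => (i : ℕ) < t),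
                c (τ i) * ∏ j ∈ Finset.univ.filter (fun j : Fin p => t ≤ (j : ℕ)), c (τ j)) := by
            apply Finset.sum_congr rfl
            intro τ _
            rw [hb τ]
            have : ∀ j : Fin p, (b (τ j) : ℚ) - 1 = c (τ j) := by intro j; simp [hc]
            simp only [this, add_mul, Finset.sum_mul]
        _ = (t : ℚ) * Pfun c t
            + ∑ i ∈ Finset.univ.filter (fun i : Fin p => (i : ℕ) < t),
              ∑ τ : Equiv.Perm (Fin p),
                c (τ i) * ∏ j ∈ Finset.univ.filter (fun j : Fin p => t ≤ (j : ℕ)), c (τ j) := by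
            rw [Finset.sum_add_distrib, ← Finset.mul_sum, Finset.sum_comm]
            rfl
        _ = (t : ℚ) * Pfun c t + (t : ℚ) * Pfun c (t - 1) := by
            have h2 : ∑ i ∈ Finset.univ.filter (fun i : Fin p => (i : ℕ) < t),
                ∑ τ : Equiv.Perm (Fin p),
                  c (τ i) * ∏ j ∈ Finset.univ.filter (fun j : Fin p => t ≤ (j : ℕ)), c (τ j)
                = ∑ _i ∈ Finset.univ.filter (fun i : Fin p => (i : ℕ) < t), Pfun c (t - 1) := by
              apply Finset.sum_congr rfl
              intro i hi
              rw [Finset.mem_filter] at hi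
              exact key_swap c ht1 htp i hi.2
            rw [h2, Finset.sum_const, hcard, nsmul_eq_mul]
        _ = (t : ℚ) * (Pfun c t + Pfun c (t - 1)) := by ring
    rw [hS]
    obtain ⟨s, rfl⟩ : ∃ s, t = s + 1 := ⟨t - 1, by omega⟩
    have hne : ((s : ℚ) + 1) ≠ 0 := by positivity
    simp only [hf, Nat.add_sub_cancel, pow_succ]
    field_simp
    ring
  rw [Finset.sum_congr rfl hterm]
  have := Finset.sum_range_sub f p  -- ∑ i in range p, (f (i+1) - f i) = f p - f 0
  have hIcc : ∑ t ∈ Finset.Icc 1 p, (f t - f (t - 1))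
      = ∑ i ∈ Finset.range p, (f (i + 1) - f i) := by
    rw [← Finset.Ico_add_one_right_eq_Icc, Finset.sum_Ico_eq_sum_range]
    apply Finset.sum_congr (by congr 1)
    intro i _
    congr 1 <;> congr 1 <;> omega
  rw [hIcc, this, hf]
  simp only [Pfun_top, Pfun_zero, pow_zero, one_mul]
  ring
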